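/- A tuple (p2, p3, p10, p12, p41, p43, p45, p119) ∈ ℚ^8 with all coordinates nonzero satisfies the system p41 = p10^3·p12, p43 = p10^2·p12^2, p45 = p10·p12^3, p119 = p41·p43·p10^2·p12^3, p119 = p10^12, p119 = p12^10, p119 = p2^60, p119 = p3^40 if and only if p10 = p43 = p119 = 1, p12 = p41 = p45 ∈ {1, −1}, p2 ∈ {1, −1}, and p3 ∈ {1, −1}. In particular the system has exactly 8 solutions with all coordinates nonzero. -/
import Mathlib

private lemma aux_pow_eq_one {x : ℚ} {n : ℕ} (hn : 0 < n) (h : x ^ n = 1) :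
    x = 1 ∨ x = -1 := by
  have h2 : |x| = 1 := by
    by_contra hne
    rcases lt_or_gt_of_ne hne with hl | hg
    · have : |x| ^ n < 1 := by
        calc |x| ^ n ≤ |x| ^ 1 := pow_le_pow_of_le_one (abs_nonneg x) hl.le hn
        _ = |x| := pow_one _
        _ < 1 := hl
      rw [← abs_pow, h, abs_one] at this; exact lt_irrefl 1 this
    · have : (1:ℚ) < |x| ^ n := by
        calc (1:ℚ) < |x| := hg
        _ = |x| ^ 1 := (pow_one _).symm
        _ ≤ |x| ^ n := pow_le_pow_right₀ hg.le hn
      rw [← abs_pow, h, abs_one] at this; exact lt_irrefl 1 this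
  rcases abs_eq (by norm_num : (0:ℚ) ≤ 1) |>.mp h2 with h | h
  · exact Or.inl h
  · exact Or.inr h

private lemma aux_main (p2 p3 p10 p12 p41 p43 p45 p119 : ℚ)
    (h2 : p2 ≠ 0) (h3 : p3 ≠ 0) (h10 : p10 ≠ 0) (h12 : p12 ≠ 0)
    (_h41 : p41 ≠ 0) (_h43 : p43 ≠ 0) (_h45 : p45 ≠ 0) (_h119 : p119 ≠ 0) :
    ((p41 = p10 ^ 3 * p12 ∧
     p43 = p10 ^ 2 * p12 ^ 2 ∧
     p45 = p10 * p12 ^ 3 ∧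
     p119 = p41 * p43 * p10 ^ 2 * p12 ^ 3 ∧
     p119 = p10 ^ 12 ∧
     p119 = p12 ^ 10 ∧
     p119 = p2 ^ 60 ∧
     p119 = p3 ^ 40) ↔
        (p10 = 1 ∧ p43 = 1 ∧ p119 = 1 ∧ p41 = p12 ∧ p45 = p12 ∧
          (p12 = 1 ∨ p12 = -1) ∧ (p2 = 1 ∨ p2 = -1) ∧ (p3 = 1 ∨ p3 = -1))) := by
  constructor
  · rintro ⟨e1, e2, e3, e4, e5, e6, e7, e8⟩
    have key1 : p10 ^ 12 = p10 ^ 7 * p12 ^ 6 := by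
      rw [← e5, e4, e1, e2]; ring
    have key2 : p10 ^ 5 = p12 ^ 6 := by
      have h7 : p10 ^ 7 ≠ 0 := pow_ne_zero _ h10
      apply mul_left_cancel₀ h7
      rw [← key1]; ring
    have key3 : p12 ^ 72 = p12 ^ 50 := by
      calc p12 ^ 72 = (p12 ^ 6) ^ 12 := by ring
        _ = (p10 ^ 5) ^ 12 := by rw [key2]
        _ = (p10 ^ 12) ^ 5 := by ring
        _ = (p12 ^ 10) ^ 5 := by rw [← e5, e6]
        _ = p12 ^ 50 := by ring
    have key4 : p12 ^ 22 = 1 := by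
      have h50 : p12 ^ 50 ≠ 0 := pow_ne_zero _ h12
      refine mul_left_cancel₀ h50 ?_
      have hh : p12 ^ 50 * p12 ^ 22 = p12 ^ 72 := by ring
      rw [hh, key3, mul_one]
    have hp12 : p12 = 1 ∨ p12 = -1 := aux_pow_eq_one (by norm_num) key4
    have h119 : p119 = 1 := by
      rcases hp12 with h | h <;> rw [e6, h] <;> norm_num
    have hp10' : p10 = 1 ∨ p10 = -1 := by
      refine aux_pow_eq_one (n := 12) (by norm_num) ?_
      rw [← e5, h119]
    have hp126 : p12 ^ 6 = 1 := by
      rcases hp12 with h | h <;> rw [h] <;> norm_num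
    have hp10 : p10 = 1 := by
      rcases hp10' with h | h
      · exact h
      · exfalso; rw [h] at key2; rw [hp126] at key2; norm_num at key2
    have hp2 : p2 = 1 ∨ p2 = -1 := by
      refine aux_pow_eq_one (n := 60) (by norm_num) ?_
      rw [← e7, h119]
    have hp3 : p3 = 1 ∨ p3 = -1 := by
      refine aux_pow_eq_one (n := 40) (by norm_num) ?_
      rw [← e8, h119]
    refine ⟨hp10, ?_, h119, ?_, ?_, hp12, hp2, hp3⟩
    · rw [e2, hp10]; rcases hp12 with h | h <;> rw [h] <;> norm_num
    · rw [e1, hp10]; ring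
    · rw [e3, hp10]; rcases hp12 with h | h <;> rw [h] <;> norm_num
  · rintro ⟨h10', h43', h119', h41', h45', h12', h2', h3'⟩
    subst h10' h43' h119' h41' h45'
    rcases h12' with h | h <;> rcases h2' with ha | ha <;> rcases h3' with hb | hb <;>
      subst h ha hb <;> norm_num

/-- Remark 3.3, algebra (ΛU₁, δ₁): characterization of the everywhere-nonzero
solutions, and there are exactly 8 of them. In the `Fin 8`-indexed set,
coordinates are `p 0 = p2`, `p 1 = p3`, `p 2 = p10`, `p 3 = p12`, `p 4 = p41`,
`p 5 = p43`, `p 6 = p45`, `p 7 = p119`. -/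
theorem stmt_5 :
    (∀ p2 p3 p10 p12 p41 p43 p45 p119 : ℚ,
      p2 ≠ 0 → p3 ≠ 0 → p10 ≠ 0 → p12 ≠ 0 → p41 ≠ 0 → p43 ≠ 0 → p45 ≠ 0 →
        p119 ≠ 0 →
      ((p41 = p10 ^ 3 * p12 ∧
     p43 = p10 ^ 2 * p12 ^ 2 ∧
     p45 = p10 * p12 ^ 3 ∧
     p119 = p41 * p43 * p10 ^ 2 * p12 ^ 3 ∧
     p119 = p10 ^ 12 ∧
     p119 = p12 ^ 10 ∧
     p119 = p2 ^ 60 ∧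
     p119 = p3 ^ 40) ↔
        (p10 = 1 ∧ p43 = 1 ∧ p119 = 1 ∧ p41 = p12 ∧ p45 = p12 ∧
          (p12 = 1 ∨ p12 = -1) ∧ (p2 = 1 ∨ p2 = -1) ∧ (p3 = 1 ∨ p3 = -1)))) ∧
    {p : Fin 8 → ℚ | (∀ i, p i ≠ 0) ∧
        p 4 = p 2 ^ 3 * p 3 ∧
        p 5 = p 2 ^ 2 * p 3 ^ 2 ∧
        p 6 = p 2 * p 3 ^ 3 ∧
        p 7 = p 4 * p 5 * p 2 ^ 2 * p 3 ^ 3 ∧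
        p 7 = p 2 ^ 12 ∧
        p 7 = p 3 ^ 10 ∧
        p 7 = p 0 ^ 60 ∧
        p 7 = p 1 ^ 40}.ncard = 8 := by
  constructor
  · exact aux_main
  · set F : ℚ × ℚ × ℚ → (Fin 8 → ℚ) :=
      fun x => ![x.1, x.2.1, 1, x.2.2, x.2.2, 1, x.2.2, 1] with hF
    have hinj : Function.Injective F := by
      rintro ⟨a, b, e⟩ ⟨a', b', e'⟩ h
      have h0 := congrFun h 0
      have h1 := congrFun h 1
      have h3 := congrFun h 3
      simp [hF] at h0 h1 h3
      simp [h0, h1, h3]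
    have hset : {p : Fin 8 → ℚ | (∀ i, p i ≠ 0) ∧
        p 4 = p 2 ^ 3 * p 3 ∧
        p 5 = p 2 ^ 2 * p 3 ^ 2 ∧
        p 6 = p 2 * p 3 ^ 3 ∧
        p 7 = p 4 * p 5 * p 2 ^ 2 * p 3 ^ 3 ∧
        p 7 = p 2 ^ 12 ∧
        p 7 = p 3 ^ 10 ∧
        p 7 = p 0 ^ 60 ∧
        p 7 = p 1 ^ 40} =
        F '' (({1, -1} : Set ℚ) ×ˢ ({1, -1} : Set ℚ) ×ˢ ({1, -1} : Set ℚ)) := by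
      ext p
      simp only [Set.mem_setOf_eq, Set.mem_image, Set.mem_prod, Set.mem_insert_iff,
        Set.mem_singleton_iff]
      constructor
      · rintro ⟨hnz, heqs⟩
        have := (aux_main (p 0) (p 1) (p 2) (p 3) (p 4) (p 5) (p 6) (p 7)
          (hnz 0) (hnz 1) (hnz 2) (hnz 3) (hnz 4) (hnz 5) (hnz 6) (hnz 7)).mp heqs
        obtain ⟨e10, e43, e119, e41, e45, h12, h2', h3'⟩ := this
        refine ⟨(p 0, p 1, p 3), ⟨h2', h3', h12⟩, ?_⟩
        funext i
        fin_cases i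
        · rfl
        · rfl
        · exact e10.symm
        · rfl
        · exact e41.symm
        · exact e43.symm
        · exact e45.symm
        · exact e119.symm
      · rintro ⟨⟨a, b, e⟩, ⟨ha, hb, he⟩, rfl⟩
        replace ha : a = 1 ∨ a = -1 := ha
        replace hb : b = 1 ∨ b = -1 := hb
        replace he : e = 1 ∨ e = -1 := he
        have he2 : e ^ 2 = 1 := by rcases he with h | h <;> rw [h] <;> norm_num
        have he10 : e ^ 10 = 1 := by rcases he with h | h <;> rw [h] <;> norm_num
        have he4 : e ^ 4 = 1 := by rcases he with h | h <;> rw [h] <;> norm_num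
        have ha60 : a ^ 60 = 1 := by rcases ha with h | h <;> rw [h] <;> norm_num
        have hb40 : b ^ 40 = 1 := by rcases hb with h | h <;> rw [h] <;> norm_num
        have hane : a ≠ 0 := by rcases ha with h | h <;> rw [h] <;> norm_num
        have hbne : b ≠ 0 := by rcases hb with h | h <;> rw [h] <;> norm_num
        have hene : e ≠ 0 := by rcases he with h | h <;> rw [h] <;> norm_num
        refine ⟨?_, ?_, ?_, ?_, ?_, ?_, ?_, ?_, ?_⟩
        · intro i
          fin_cases i
          · exact hane
          · exact hbne
          · exact one_ne_zero
          · exact hene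
          · exact hene
          · exact one_ne_zero
          · exact hene
          · exact one_ne_zero
        · show e = (1:ℚ) ^ 3 * e; ring
        · show (1:ℚ) = 1 ^ 2 * e ^ 2
          rw [he2]; norm_num
        · show e = 1 * e ^ 3
          have h3' : e ^ 3 = e ^ 2 * e := by ring
          rw [h3', he2]; ring
        · show (1:ℚ) = e * 1 * 1 ^ 2 * e ^ 3
          have h4' : e * 1 * 1 ^ 2 * e ^ 3 = e ^ 4 := by ring
          rw [h4', he4]
        · show (1:ℚ) = 1 ^ 12
          norm_num
        · show (1:ℚ) = e ^ 10
          rw [he10]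
        · show (1:ℚ) = a ^ 60
          rw [ha60]
        · show (1:ℚ) = b ^ 40
          rw [hb40]
    rw [hset, Set.ncard_image_of_injective _ hinj]
    have hco : (({1, -1} : Set ℚ) ×ˢ ({1, -1} : Set ℚ) ×ˢ ({1, -1} : Set ℚ)) =
        ↑((({1, -1} : Finset ℚ) ×ˢ (({1, -1} : Finset ℚ) ×ˢ ({1, -1} : Finset ℚ)))) := by
      simp
    rw [hco, Set.ncard_coe_finset, Finset.card_product, Finset.card_product]
    have h2c : ({1, -1} : Finset ℚ).card = 2 := by
      rw [Finset.card_insert_of_notMem (by norm_num), Finset.card_singleton]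
    rw [h2c]
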